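/- Let m and n be positive coprime integers and consider the action of the circle group on D² × S² given by g • (ζ, (w, t)) = (gᵐ·ζ, (gⁿ·w, t)). Then the orbit space of this action, i.e., the quotient of D² × S² by the orbit equivalence relation with the quotient topology, is homeomorphic to the closed unit ball in ℝ³. -/

import Mathlib

/-!
Write `r = ‖ζ‖`, `s = ‖w‖`. The orbit map sends `(ζ, (w, t))` to `(Z, t (1 + r) / 2) ∈ ℂ × ℝ = ℝ³`
with `Z = r s (ζ / r)ⁿ conj (w / s)ᵐ`. It is invariant since `gᵐⁿ conj gᵐⁿ = 1`, and `‖Z‖ = r s`.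
The map `(r, t) ↦ (r s, t (1 + r) / 2)` is a bijection from `[0, 1] × [-1, 1]` onto the half disc
`{X ≥ 0, X² + Y² ≤ 1}`, and it sends exactly the sides `r = 0` and `t = ±1`, where the phase of `Z`
is lost, to the axis `X = 0`; spinning the half disc about that axis by the phase of `Z` fills the
ball. If two points have the same image, then `r, s, t` agree and the phases `a = ζ' / ζ`,
`b = w' / w` satisfy `aⁿ = bᵐ`, so coprimality gives `g` with `gᵐ = a`, `gⁿ = b`. Finally, a
continuous bijection from the compact orbit space onto the Hausdorff ball is a homeomorphism.
-/

noncomputable section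

/-- The closed unit disk `{ζ : ℂ | |ζ| ≤ 1}`. -/
abbrev D2 : Type := {ζ : ℂ // ‖ζ‖ ≤ 1}

/-- The unit 2-sphere `{(w, t) : ℂ × ℝ | |w|² + t² = 1}`. -/
abbrev S2 : Type := {p : ℂ × ℝ // ‖p.1‖ ^ 2 + p.2 ^ 2 = 1}

/-- The Pao model circle action on `D² × S²`:
`g • (ζ, (w, t)) = (gᵐ·ζ, (gⁿ·w, t))`. -/
def paoAct (m n : ℕ) (g : Circle) (x : D2 × S2) : D2 × S2 :=
  (⟨(g : ℂ) ^ m * x.1.1, by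
      simpa [norm_mul, norm_pow, Circle.norm_coe] using x.1.2⟩,
   ⟨((g : ℂ) ^ n * x.2.1.1, x.2.1.2), by
      simpa [norm_mul, norm_pow, Circle.norm_coe] using x.2.2⟩)

open ComplexConjugate Function Filter Topology

theorem exists_pow_eq_and_pow_eq_of_coprime {G : Type*} [CommGroup G] {m n : ℕ}
    (hmn : m.Coprime n) {a b : G} (h : a ^ n = b ^ m) : ∃ g : G, g ^ m = a ∧ g ^ n = b := by
  obtain ⟨u, v, huv⟩ := Nat.isCoprime_iff_coprime.2 hmn
  have hab : a ^ (n : ℤ) = b ^ (m : ℤ) := by exact_mod_cast h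
  refine ⟨a ^ u * b ^ v, ?_, ?_⟩
  · calc (a ^ u * b ^ v) ^ m = a ^ (u * m) * (b ^ (m : ℤ)) ^ v := by
          rw [← zpow_natCast, mul_zpow, ← zpow_mul, ← zpow_mul, ← zpow_mul, mul_comm v]
      _ = a := by rw [← hab, ← zpow_mul, ← zpow_add, mul_comm _ v, huv, zpow_one]
  · calc (a ^ u * b ^ v) ^ n = (a ^ (n : ℤ)) ^ u * b ^ (v * n) := by
          rw [← zpow_natCast, mul_zpow, ← zpow_mul, ← zpow_mul, ← zpow_mul, mul_comm u]
      _ = b := by rw [hab, ← zpow_mul, ← zpow_add, mul_comm _ u, huv, zpow_one]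

theorem Circle.exists_pow_eq {k : ℕ} (hk : k ≠ 0) (c : Circle) : ∃ g : Circle, g ^ k = c := by
  obtain ⟨θ, rfl⟩ := Circle.exp_surjective c
  refine ⟨Circle.exp (θ / k), ?_⟩
  rw [← Circle.exp_natCast_mul, mul_div_cancel₀ _ (by exact_mod_cast hk)]

theorem Circle.exists_mul_eq_of_norm_eq {z w : ℂ} (h : ‖z‖ = ‖w‖) : ∃ a : Circle, a * z = w := by
  rcases eq_or_ne z 0 with rfl | hz
  · exact ⟨1, by simpa [eq_comm] using h⟩
  · refine ⟨⟨w / z, mem_sphere_zero_iff_norm.2 ?_⟩, div_mul_cancel₀ w hz⟩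
    rw [norm_div, h, div_self (h ▸ norm_ne_zero_iff.2 hz)]

theorem Continuous.smul_of_norm_le {X E : Type*} [TopologicalSpace X] [NormedAddCommGroup E]
    [NormedSpace ℝ E] {f : X → ℝ} {u : X → E} {C : ℝ} (hf : Continuous f)
    (hu : ∀ x, f x ≠ 0 → ContinuousAt u x) (hC : ∀ x, ‖u x‖ ≤ C) :
    Continuous fun x => f x • u x := by
  refine continuous_iff_continuousAt.2 fun x => ?_
  rcases eq_or_ne (f x) 0 with hx | hx
  · have hlim : Tendsto (fun y => ‖f y‖ * C) (𝓝 x) (𝓝 0) := by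
      simpa [hx] using ((hf.tendsto x).norm.mul_const C)
    simpa [ContinuousAt, hx] using squeeze_zero_norm
      (fun y => (norm_smul (f y) (u y)).trans_le (by gcongr; exact hC y)) hlim
  · exact hf.continuousAt.smul (hu x hx)

def quotHomeomorphOfCompactToT2 {X Y : Type*} [TopologicalSpace X] [CompactSpace X]
    [TopologicalSpace Y] [T2Space Y] {r : X → X → Prop} {f : X → Y} (hf : Continuous f)
    (hsurj : Surjective f) (hr : ∀ x y, f x = f y ↔ r x y) : Quot r ≃ₜ Y :=
  have hlift : ∀ x y, r x y → f x = f y := fun x y => (hr x y).2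
  Continuous.homeoOfEquivCompactToT2 (f := Equiv.ofBijective (Quot.lift f hlift)
    ⟨fun x y => Quot.induction_on₂ x y fun x y h => Quot.sound ((hr x y).1 h),
      fun y => (hsurj y).elim fun x hx => ⟨Quot.mk r x, hx⟩⟩)
    (continuous_quot_lift hlift hf)

namespace PaoModel

/-- `phase 0 = 0`; it only ever appears multiplied by `‖z‖`. -/
def phase (z : ℂ) : ℂ := z / ‖z‖

theorem norm_phase_of_ne_zero {z : ℂ} (hz : z ≠ 0) : ‖phase z‖ = 1 := by
  rw [phase, norm_div, Complex.norm_real, norm_norm, div_self (norm_ne_zero_iff.2 hz)]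

theorem norm_phase_le_one (z : ℂ) : ‖phase z‖ ≤ 1 := by
  rcases eq_or_ne z 0 with rfl | hz
  · simp [phase]
  · exact (norm_phase_of_ne_zero hz).le

theorem phase_circle_mul (a : Circle) (z : ℂ) : phase (a * z) = a * phase z := by
  rw [phase, phase, norm_mul, Circle.norm_coe, one_mul, mul_div_assoc]

theorem phase_ofReal_mul {r : ℝ} (hr : 0 < r) (z : ℂ) : phase (r * z) = phase z := by
  rw [phase, phase, norm_mul, Complex.norm_real, Real.norm_of_nonneg hr.le, Complex.ofReal_mul,
    mul_div_mul_left _ _ (by exact_mod_cast hr.ne')]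

theorem continuousAt_phase {z : ℂ} (hz : z ≠ 0) : ContinuousAt phase z :=
  continuousAt_id.div (Complex.continuous_ofReal.comp continuous_norm).continuousAt
    (by exact_mod_cast norm_ne_zero_iff.2 hz)


theorem mul_lt_mul_of_lt_of_mul_one_add_eq {r₁ r₂ s₁ s₂ t₁ t₂ : ℝ} (hr₂ : 0 ≤ r₂)
    (hs₁ : 0 ≤ s₁) (hs₂ : 0 ≤ s₂) (h₁ : s₁ ^ 2 + t₁ ^ 2 = 1) (h₂ : s₂ ^ 2 + t₂ ^ 2 = 1)
    (ht₁ : 0 ≤ t₁) (ht : t₁ < t₂) (hY : t₁ * (1 + r₁) = t₂ * (1 + r₂)) :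
    r₂ * s₂ < r₁ * s₁ := by
  have hr : r₂ < r₁ := by nlinarith
  have hs : s₂ < s₁ := by nlinarith
  nlinarith

theorem le_of_mul_eq_of_mul_one_add_eq {r₁ r₂ s₁ s₂ t₁ t₂ : ℝ} (hr₁ : 0 ≤ r₁) (hr₂ : 0 ≤ r₂)
    (hs₁ : 0 ≤ s₁) (hs₂ : 0 ≤ s₂) (h₁ : s₁ ^ 2 + t₁ ^ 2 = 1) (h₂ : s₂ ^ 2 + t₂ ^ 2 = 1)
    (hX : r₁ * s₁ = r₂ * s₂) (hY : t₁ * (1 + r₁) = t₂ * (1 + r₂)) : t₂ ≤ t₁ := by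
  by_contra! ht
  rcases le_or_gt 0 t₁ with ht₁ | ht₁
  · exact (mul_lt_mul_of_lt_of_mul_one_add_eq hr₂ hs₁ hs₂ h₁ h₂ ht₁ ht hY).ne' hX
  rcases le_or_gt t₂ 0 with ht₂ | ht₂
  · refine (mul_lt_mul_of_lt_of_mul_one_add_eq hr₁ hs₂ hs₁ (t₁ := -t₂) (t₂ := -t₁)
      (by linear_combination h₂) (by linear_combination h₁) (neg_nonneg.2 ht₂) (neg_lt_neg ht)
      (by linear_combination hY)).ne hX
  · nlinarith

theorem eq_of_mul_eq_of_mul_one_add_eq {r₁ r₂ s₁ s₂ t₁ t₂ : ℝ} (hr₁ : 0 ≤ r₁) (hr₂ : 0 ≤ r₂)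
    (hs₁ : 0 ≤ s₁) (hs₂ : 0 ≤ s₂) (h₁ : s₁ ^ 2 + t₁ ^ 2 = 1) (h₂ : s₂ ^ 2 + t₂ ^ 2 = 1)
    (hX : r₁ * s₁ = r₂ * s₂) (hY : t₁ * (1 + r₁) = t₂ * (1 + r₂)) :
    r₁ = r₂ ∧ s₁ = s₂ ∧ t₁ = t₂ := by
  obtain rfl : t₁ = t₂ := le_antisymm
    (le_of_mul_eq_of_mul_one_add_eq hr₂ hr₁ hs₂ hs₁ h₂ h₁ hX.symm hY.symm)
    (le_of_mul_eq_of_mul_one_add_eq hr₁ hr₂ hs₁ hs₂ h₁ h₂ hX hY)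
  obtain rfl : s₁ = s₂ := by nlinarith
  refine ⟨?_, rfl, rfl⟩
  rcases hs₁.eq_or_lt with rfl | hs
  · have ht : t₁ ≠ 0 := by rintro rfl; norm_num at h₁
    linarith [mul_left_cancel₀ ht hY]
  · exact mul_right_cancel₀ hs.ne' hX


theorem exists_mul_eq_zero_of_sq_le_one (Y : ℝ) (h : Y ^ 2 ≤ 1) :
    ∃ r s t : ℝ, 0 ≤ r ∧ r ≤ 1 ∧ 0 ≤ s ∧ s ^ 2 + t ^ 2 = 1 ∧ r * s = 0 ∧
      t * (1 + r) / 2 = Y := by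
  rcases le_or_gt |Y| (1 / 2) with hY | hY
  · obtain ⟨hY₁, hY₂⟩ := abs_le.1 hY
    have h4 : 0 ≤ 1 - (2 * Y) ^ 2 := by nlinarith
    exact ⟨0, √(1 - (2 * Y) ^ 2), 2 * Y, le_rfl, zero_le_one, Real.sqrt_nonneg _,
      by rw [Real.sq_sqrt h4]; ring, zero_mul _, by ring⟩
  rcases lt_abs.1 hY with hY | hY
  · exact ⟨2 * Y - 1, 0, 1, by linarith, by nlinarith, le_rfl, by norm_num, mul_zero _, by ring⟩
  · exact ⟨-2 * Y - 1, 0, -1, by linarith, by nlinarith, le_rfl, by norm_num, mul_zero _,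
      by ring⟩

/- With `r = X / √(1 - t²)`, solve `t (1 + r) / 2 = Y` for `t ∈ [-T, T]`, `T = √(1 - X²)`, by the
intermediate value theorem: at `t = ±T` we have `r = 1` and the left side is `±T`. -/
theorem exists_mul_eq_of_pos_of_sq_add_sq_le {X Y : ℝ} (hX : 0 < X) (h : X ^ 2 + Y ^ 2 ≤ 1) :
    ∃ r s t : ℝ, 0 ≤ r ∧ r ≤ 1 ∧ 0 ≤ s ∧ s ^ 2 + t ^ 2 = 1 ∧ r * s = X ∧
      t * (1 + r) / 2 = Y := by
  set T := √(1 - X ^ 2)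
  have hT : T ^ 2 = 1 - X ^ 2 := Real.sq_sqrt (by nlinarith)
  have hYT : |Y| ≤ T := Real.abs_le_sqrt (by linarith)
  have hpos : ∀ t ∈ Set.Icc (-T) T, X ^ 2 ≤ 1 - t ^ 2 := fun t ht => by
    nlinarith [sq_le_sq' ht.1 ht.2]
  set f : ℝ → ℝ := fun t => t * (1 + X / √(1 - t ^ 2)) / 2
  have hf : ContinuousOn f (Set.Icc (-T) T) := by
    refine ContinuousOn.div_const (continuousOn_id.mul (continuousOn_const.add
      (continuousOn_const.div (by fun_prop) fun t ht => ?_))) 2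
    exact (Real.sqrt_pos.2 (by nlinarith [hpos t ht])).ne'
  have hsT : √(1 - T ^ 2) = X := by rw [hT, sub_sub_cancel, Real.sqrt_sq hX.le]
  have hfT : f T = T := by simp only [f, hsT, div_self hX.ne']; ring
  have hfnT : f (-T) = -T := by simp only [f, neg_sq, hsT, div_self hX.ne']; ring
  obtain ⟨t, ht, rfl⟩ := intermediate_value_Icc (neg_le_self (Real.sqrt_nonneg _)) hf
    (show Y ∈ Set.Icc (f (-T)) (f T) by rw [hfT, hfnT]; exact abs_le.1 hYT)
  set s := √(1 - t ^ 2)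
  have hs : s ^ 2 = 1 - t ^ 2 := Real.sq_sqrt (by nlinarith [hpos t ht])
  have hXs : X ≤ s := Real.le_sqrt_of_sq_le (hpos t ht)
  have hs₀ : 0 < s := hX.trans_le hXs
  exact ⟨X / s, s, t, by positivity, (div_le_one hs₀).2 hXs, hs₀.le, by linarith,
    div_mul_cancel₀ _ hs₀.ne', rfl⟩

theorem exists_mul_eq_of_sq_add_sq_le {X Y : ℝ} (hX : 0 ≤ X) (h : X ^ 2 + Y ^ 2 ≤ 1) :
    ∃ r s t : ℝ, 0 ≤ r ∧ r ≤ 1 ∧ 0 ≤ s ∧ s ^ 2 + t ^ 2 = 1 ∧ r * s = X ∧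
      t * (1 + r) / 2 = Y := by
  rcases hX.eq_or_lt with rfl | hX
  · exact exists_mul_eq_zero_of_sq_le_one Y (by nlinarith)
  · exact exists_mul_eq_of_pos_of_sq_add_sq_le hX h


variable (m n : ℕ)

def twist (z w : ℂ) : ℂ := (‖z‖ * ‖w‖) • (phase z ^ n * conj (phase w) ^ m)

theorem norm_twist (z w : ℂ) : ‖twist m n z w‖ = ‖z‖ * ‖w‖ := by
  rcases eq_or_ne z 0 with rfl | hz
  · simp [twist]
  rcases eq_or_ne w 0 with rfl | hw
  · simp [twist]
  rw [twist, norm_smul, Real.norm_of_nonneg (by positivity), norm_mul, norm_pow, norm_pow,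
    Complex.norm_conj, norm_phase_of_ne_zero hz, norm_phase_of_ne_zero hw, one_pow, one_pow,
    mul_one, mul_one]

theorem twist_circle_mul (a b : Circle) (z w : ℂ) :
    twist m n (a * z) (b * w) = ((a ^ n / b ^ m : Circle) : ℂ) * twist m n z w := by
  simp only [twist, norm_mul, Circle.norm_coe, one_mul, phase_circle_mul, map_mul,
    Circle.coe_div, Circle.coe_pow, mul_smul_comm]
  rw [div_eq_mul_inv, ← inv_pow, ← Circle.coe_inv, Circle.coe_inv_eq_conj]
  congr 1
  ring

theorem twist_pow_mul_pow (g : Circle) (z w : ℂ) :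
    twist m n (g ^ m * z) (g ^ n * w) = twist m n z w := by
  simpa [← pow_mul, mul_comm n m] using twist_circle_mul m n (g ^ m) (g ^ n) z w

theorem twist_ofReal_mul {r s : ℝ} (hr : 0 ≤ r) (hs : 0 ≤ s) {c : ℂ} (hc : ‖c‖ = 1) :
    twist m n (r * c) s = (r * s) • c ^ n := by
  have hnorm : ‖(r : ℂ) * c‖ * ‖(s : ℂ)‖ = r * s := by
    rw [norm_mul, hc, mul_one, Complex.norm_real, Complex.norm_real, Real.norm_of_nonneg hr,
      Real.norm_of_nonneg hs]
  rw [twist, hnorm]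
  rcases hr.eq_or_lt with rfl | hr
  · simp
  rcases hs.eq_or_lt with rfl | hs
  · simp
  have hs1 : phase s = 1 := by
    rw [phase, Complex.norm_real, Real.norm_of_nonneg hs.le, div_self (by exact_mod_cast hs.ne')]
  rw [phase_ofReal_mul hr, phase, hc, Complex.ofReal_one, div_one, hs1, map_one, one_pow, mul_one]

theorem continuous_twist : Continuous fun x : ℂ × ℂ => twist m n x.1 x.2 := by
  refine Continuous.smul_of_norm_le (C := 1) (by fun_prop) (fun x hx => ?_) fun x => ?_
  · have hz : x.1 ≠ 0 := fun h => hx (by simp [h])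
    have hw : x.2 ≠ 0 := fun h => hx (by simp [h])
    exact (((continuousAt_phase hz).comp continuousAt_fst).pow n).mul
      ((Complex.continuous_conj.continuousAt.comp
        ((continuousAt_phase hw).comp continuousAt_snd)).pow m)
  · rw [norm_mul, norm_pow, norm_pow, Complex.norm_conj]
    exact mul_le_one₀ (pow_le_one₀ (norm_nonneg _) (norm_phase_le_one _)) (by positivity)
      (pow_le_one₀ (norm_nonneg _) (norm_phase_le_one _))

theorem exists_circle_of_twist_eq (hm : 0 < m) (hn : 0 < n) (hmn : m.Coprime n) {z w z' w' : ℂ}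
    (hz : ‖z‖ = ‖z'‖) (hw : ‖w‖ = ‖w'‖) (h : twist m n z w = twist m n z' w') :
    ∃ g : Circle, g ^ m * z = z' ∧ g ^ n * w = w' := by
  obtain ⟨a, rfl⟩ := Circle.exists_mul_eq_of_norm_eq hz
  obtain ⟨b, rfl⟩ := Circle.exists_mul_eq_of_norm_eq hw
  rcases eq_or_ne z 0 with rfl | hz0
  · obtain ⟨g, rfl⟩ := Circle.exists_pow_eq hn.ne' b
    exact ⟨g, by simp, rfl⟩
  rcases eq_or_ne w 0 with rfl | hw0
  · obtain ⟨g, rfl⟩ := Circle.exists_pow_eq hm.ne' a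
    exact ⟨g, rfl, by simp⟩
  have htwist : twist m n z w ≠ 0 := by
    rw [← norm_ne_zero_iff, norm_twist]
    exact mul_ne_zero (norm_ne_zero_iff.2 hz0) (norm_ne_zero_iff.2 hw0)
  rw [twist_circle_mul, eq_comm, mul_eq_right₀ htwist, Circle.coe_eq_one, div_eq_one] at h
  obtain ⟨g, rfl, rfl⟩ := exists_pow_eq_and_pow_eq_of_coprime hmn h
  exact ⟨g, rfl, rfl⟩



def orbitMap (p : D2 × S2) : EuclideanSpace ℝ (Fin 3) :=
  !₂[(twist m n p.1.1 p.2.1.1).re, (twist m n p.1.1 p.2.1.1).im,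
    p.2.1.2 * (1 + ‖p.1.1‖) / 2]

theorem orbitMap_paoAct (g : Circle) (p : D2 × S2) :
    orbitMap m n (paoAct m n g p) = orbitMap m n p := by
  simp only [orbitMap, paoAct, twist_pow_mul_pow, norm_mul, norm_pow, Circle.norm_coe, one_pow,
    one_mul]

theorem norm_orbitMap_sq (p : D2 × S2) :
    ‖orbitMap m n p‖ ^ 2 = (‖p.1.1‖ * ‖p.2.1.1‖) ^ 2 + (p.2.1.2 * (1 + ‖p.1.1‖) / 2) ^ 2 := by
  rw [EuclideanSpace.real_norm_sq_eq, Fin.sum_univ_three, ← norm_twist m n, Complex.sq_norm,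
    Complex.normSq_apply]
  simp [orbitMap]
  ring

theorem orbitMap_mem_closedBall (p : D2 × S2) : orbitMap m n p ∈ Metric.closedBall 0 1 := by
  have hr : ‖p.1.1‖ ≤ 1 := p.1.2
  have hst : ‖p.2.1.1‖ ^ 2 + p.2.1.2 ^ 2 = 1 := p.2.2
  have hX : (‖p.1.1‖ * ‖p.2.1.1‖) ^ 2 ≤ ‖p.2.1.1‖ ^ 2 := by
    rw [mul_pow]
    exact mul_le_of_le_one_left (sq_nonneg _) (pow_le_one₀ (norm_nonneg _) hr)
  have hY : (p.2.1.2 * (1 + ‖p.1.1‖) / 2) ^ 2 ≤ p.2.1.2 ^ 2 := by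
    rw [mul_div_assoc, mul_pow]
    exact mul_le_of_le_one_right (sq_nonneg _) (pow_le_one₀ (by positivity) (by linarith))
  rw [mem_closedBall_zero_iff, ← sq_le_one_iff₀ (norm_nonneg _), norm_orbitMap_sq]
  linarith

theorem continuous_orbitMap : Continuous (orbitMap m n) := by
  have hZ : Continuous fun p : D2 × S2 => twist m n p.1.1 p.2.1.1 :=
    (continuous_twist m n).comp (f := fun p : D2 × S2 => (p.1.1, p.2.1.1)) (by fun_prop)
  refine (PiLp.continuous_toLp 2 (fun _ : Fin 3 => ℝ)).comp (continuous_pi fun i => ?_)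
  fin_cases i
  · exact Complex.continuous_re.comp hZ
  · exact Complex.continuous_im.comp hZ
  · exact (show Continuous fun p : D2 × S2 => p.2.1.2 * (1 + ‖p.1.1‖) / 2 by fun_prop)

theorem exists_paoAct_eq_of_orbitMap_eq (hm : 0 < m) (hn : 0 < n) (hmn : m.Coprime n)
    {p q : D2 × S2} (h : orbitMap m n p = orbitMap m n q) : ∃ g : Circle, paoAct m n g p = q := by
  have hZ : twist m n p.1.1 p.2.1.1 = twist m n q.1.1 q.2.1.1 :=
    Complex.ext (by simpa [orbitMap] using congrArg (· 0) h)
      (by simpa [orbitMap] using congrArg (· 1) h)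
  have hX : ‖p.1.1‖ * ‖p.2.1.1‖ = ‖q.1.1‖ * ‖q.2.1.1‖ := by
    rw [← norm_twist m n, hZ, norm_twist]
  have hY : p.2.1.2 * (1 + ‖p.1.1‖) = q.2.1.2 * (1 + ‖q.1.1‖) := by
    simpa [orbitMap] using congrArg (· 2) h
  obtain ⟨hr, hs, ht⟩ := eq_of_mul_eq_of_mul_one_add_eq (norm_nonneg _) (norm_nonneg _)
    (norm_nonneg _) (norm_nonneg _) p.2.2 q.2.2 hX hY
  obtain ⟨g, hζ, hw⟩ := exists_circle_of_twist_eq m n hm hn hmn hr hs hZ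
  exact ⟨g, Prod.ext (Subtype.ext hζ) (Subtype.ext (Prod.ext hw ht))⟩

theorem exists_orbitMap_eq (hn : 0 < n) {v : EuclideanSpace ℝ (Fin 3)} (hv : ‖v‖ ≤ 1) :
    ∃ p : D2 × S2, orbitMap m n p = v := by
  set Z : ℂ := ⟨v 0, v 1⟩
  have hZv : ‖Z‖ ^ 2 + v 2 ^ 2 ≤ 1 := by
    have h := EuclideanSpace.real_norm_sq_eq v
    rw [Fin.sum_univ_three] at h
    rw [Complex.sq_norm, Complex.normSq_mk]
    nlinarith [norm_nonneg v]
  obtain ⟨r, s, t, hr₀, hr₁, hs₀, hst, hX, hY⟩ := exists_mul_eq_of_sq_add_sq_le (norm_nonneg Z) hZv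
  obtain ⟨c, hc⟩ := Circle.exists_pow_eq hn.ne' (Circle.exp Z.arg)
  have hrc : ‖(r : ℂ) * c‖ = r := by
    rw [norm_mul, Circle.norm_coe, mul_one, Complex.norm_real, Real.norm_of_nonneg hr₀]
  have hs : ‖(s : ℂ)‖ = s := by rw [Complex.norm_real, Real.norm_of_nonneg hs₀]
  have htwist : twist m n (r * c) s = Z := by
    rw [twist_ofReal_mul m n hr₀ hs₀ (Circle.norm_coe c), ← Circle.coe_pow, hc, Circle.coe_exp,
      hX, Complex.real_smul, Complex.norm_mul_exp_arg_mul_I]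
  refine ⟨(⟨r * c, hrc.trans_le hr₁⟩, ⟨(s, t), by rwa [hs]⟩), ?_⟩
  ext i
  fin_cases i <;> simp [orbitMap, htwist, Z, Circle.norm_coe, abs_of_nonneg hr₀, hY]

instance : CompactSpace D2 := by
  have h : IsCompact {ζ : ℂ | ‖ζ‖ ≤ 1} := by
    simpa [Metric.closedBall] using isCompact_closedBall (0 : ℂ) 1
  exact isCompact_iff_compactSpace.1 h

instance : CompactSpace S2 := by
  refine isCompact_iff_compactSpace.1 (Metric.isCompact_of_isClosed_isBounded
    (isClosed_eq (by fun_prop) continuous_const)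
    ((Metric.isBounded_closedBall (x := (0 : ℂ × ℝ)) (r := 1)).subset fun p hp => ?_))
  replace hp : ‖p.1‖ ^ 2 + p.2 ^ 2 = 1 := hp
  rw [mem_closedBall_zero_iff, Prod.norm_def, max_le_iff, Real.norm_eq_abs, abs_le]
  refine ⟨?_, ?_, ?_⟩ <;> nlinarith [norm_nonneg p.1]

end PaoModel

/-- For positive coprime `m`, `n`, the orbit space of the Pao model action on `D² × S²`
(the quotient by the orbit equivalence relation, with the quotient topology) is
homeomorphic to the closed unit ball in `ℝ³`. -/
theorem stmt11 (m n : ℕ) (hm : 0 < m) (hn : 0 < n) (hmn : Nat.Coprime m n) :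
    Nonempty
      ((Quot fun x y : D2 × S2 => ∃ g : Circle, paoAct m n g x = y) ≃ₜ
        Metric.closedBall (0 : EuclideanSpace ℝ (Fin 3)) 1) := by
  refine ⟨quotHomeomorphOfCompactToT2 ((PaoModel.continuous_orbitMap m n).subtype_mk
    (PaoModel.orbitMap_mem_closedBall m n)) ?_ fun p q => ⟨fun h => ?_, ?_⟩⟩
  · rintro ⟨v, hv⟩
    obtain ⟨p, hp⟩ := PaoModel.exists_orbitMap_eq m n hn (mem_closedBall_zero_iff.1 hv)
    exact ⟨p, Subtype.ext hp⟩
  · exact PaoModel.exists_paoAct_eq_of_orbitMap_eq m n hm hn hmn (congrArg Subtype.val h)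
  · rintro ⟨g, rfl⟩
    exact Subtype.ext (PaoModel.orbitMap_paoAct m n g p).symm
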